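/- Every Φ-extreme point of K is Φ-extreme in the sense of Ky Fan; that is, if x ∈ K is such that δ^Φ(x) is an extreme point of K(Φ), then whenever x ∈ [y,z]_Φ for y, z ∈ K, it follows that x = y = z. -/

import Mathlib

open MeasureTheory Set

section Defs

variable {K : Type*} [TopologicalSpace K] [CompactSpace K]

/-- The canonical injection `δ^Φ : K → Φ*`, `δ^Φ(x)(φ) = φ(x)`. -/
noncomputable def deltaPhi (Φ : Submodule ℝ C(K, ℝ)) (x : K) : WeakDual ℝ ↥Φ :=
  (ContinuousMap.evalCLM ℝ x).comp Φ.subtypeL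

/-- The set `K(Φ) = {Q ∈ Φ* : ‖Q‖ = Q(𝟏) = 1}`. -/
noncomputable def KPhi (Φ : Submodule ℝ C(K, ℝ))
    (h1 : ContinuousMap.const K (1 : ℝ) ∈ Φ) : Set (WeakDual ℝ ↥Φ) :=
  {Q | @norm _ (ContinuousLinearMap.hasOpNorm (𝕜 := ℝ) (𝕜₂ := ℝ) (E := ↥Φ) (F := ℝ))
      (WeakDual.toStrongDual Q) = 1 ∧ Q ⟨ContinuousMap.const K (1 : ℝ), h1⟩ = 1}

end Defs

/-!
The Ky Fan condition, applied to `φ` and `-φ`, forces `φ x` to lie between `φ y` and `φ z` for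
every `φ ∈ Φ`. A linear functional that is pointwise between two others is a convex combination
of them (test it on a vector where they differ), so `δ x` lies on the segment `[δ y, δ z]` inside
`K(Φ)`. Being extreme, `δ x` is one of the endpoints, so `x = y` say by injectivity of `δ`; then
the Ky Fan condition reads `φ x ≤ φ z → φ x = φ z`, which for `±φ` and a separating `φ` gives
`x = z`.
-/

theorem LinearMap.mem_segment_of_forall_apply_mem_uIcc {𝕜 V : Type*} [Field 𝕜] [LinearOrder 𝕜]
    [IsStrictOrderedRing 𝕜] [AddCommGroup V] [Module 𝕜 V] {f g h : V →ₗ[𝕜] 𝕜}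
    (H : ∀ v, f v ∈ uIcc (g v) (h v)) : f ∈ segment 𝕜 g h := by
  by_cases hgh : g = h
  · subst hgh
    rw [segment_same, mem_singleton_iff]
    ext v
    simpa using H v
  obtain ⟨v₀, hv₀⟩ : ∃ v₀, g v₀ ≠ h v₀ := by
    by_contra! hall
    exact hgh (LinearMap.ext hall)
  obtain ⟨a, b, ha, hb, hab, hfv₀⟩ := (segment_eq_uIcc (g v₀) (h v₀)).symm ▸ H v₀
  refine ⟨a, b, ha, hb, hab, LinearMap.ext fun v => ?_⟩
  set c := (h v - g v) / (h v₀ - g v₀)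
  have hc : c * (h v₀ - g v₀) = h v - g v := div_mul_cancel₀ _ (sub_ne_zero.2 hv₀.symm)
  clear_value c
  -- on `w = v - c • v₀` the functionals `g` and `h` agree, hence so does `f`
  have hw : f (v - c • v₀) = g (v - c • v₀) := by
    have hgw : g (v - c • v₀) = h (v - c • v₀) := by
      simp only [map_sub, map_smul, smul_eq_mul]
      linear_combination hc
    simpa [hgw] using H (v - c • v₀)
  simp only [map_sub, map_smul, smul_eq_mul] at hw hfv₀
  simp only [LinearMap.add_apply, LinearMap.smul_apply, smul_eq_mul]
  linear_combination c * hfv₀ - hw - b * hc + (g v - c * g v₀) * hab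

def kyFanSegment {K : Type*} [TopologicalSpace K] (Φ : Submodule ℝ C(K, ℝ)) (y z : K) : Set K :=
  {x | ∀ φ ∈ Φ, φ x ≤ min (φ y) (φ z) → φ x = φ y ∧ φ x = φ z}

section KyFan

variable {K : Type*} [TopologicalSpace K] {Φ : Submodule ℝ C(K, ℝ)} {x y z : K}

theorem apply_mem_uIcc_of_mem_kyFanSegment (hx : x ∈ kyFanSegment Φ y z) {φ : C(K, ℝ)}
    (hφ : φ ∈ Φ) : φ x ∈ uIcc (φ y) (φ z) := by
  have hmin : ∀ ψ ∈ Φ, min (ψ y) (ψ z) ≤ ψ x := fun ψ hψ => by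
    by_contra! hlt
    have hxy := (hx ψ hψ hlt.le).1
    exact (min_le_left _ _).not_gt (hxy ▸ hlt)
  have hmax := hmin (-φ) (neg_mem hφ)
  simp only [ContinuousMap.neg_apply, min_neg_neg, neg_le_neg_iff] at hmax
  exact ⟨hmin φ hφ, hmax⟩

theorem eq_of_forall_le_imp_eq (hsep : ∀ x y : K, x ≠ y → ∃ φ ∈ Φ, φ x ≠ φ y)
    (h : ∀ φ ∈ Φ, φ x ≤ φ y → φ x = φ y) : x = y := by
  by_contra hxy
  obtain ⟨φ, hφ, hne⟩ := hsep x y hxy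
  rcases le_total (φ x) (φ y) with hle | hle
  · exact hne (h φ hφ hle)
  · have := h (-φ) (neg_mem hφ) (by simpa using hle)
    exact hne (by simpa using this)

theorem eq_of_mem_kyFanSegment_left (hsep : ∀ x y : K, x ≠ y → ∃ φ ∈ Φ, φ x ≠ φ y)
    (hx : x ∈ kyFanSegment Φ x z) : x = z :=
  eq_of_forall_le_imp_eq hsep fun φ hφ hle => (hx φ hφ (le_min le_rfl hle)).2

theorem eq_of_mem_kyFanSegment_right (hsep : ∀ x y : K, x ≠ y → ∃ φ ∈ Φ, φ x ≠ φ y)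
    (hx : x ∈ kyFanSegment Φ y x) : x = y :=
  eq_of_forall_le_imp_eq hsep fun φ hφ hle => (hx φ hφ (le_min hle le_rfl)).1

end KyFan

section Delta

variable {K : Type*} [TopologicalSpace K] {Φ : Submodule ℝ C(K, ℝ)}

@[simp]
theorem deltaPhi_apply (x : K) (φ : Φ) : deltaPhi Φ x φ = (φ : C(K, ℝ)) x := rfl

theorem deltaPhi_injective (hsep : ∀ x y : K, x ≠ y → ∃ φ ∈ Φ, φ x ≠ φ y) :
    Function.Injective (deltaPhi Φ) := fun x y hxy => by
  by_contra hne
  obtain ⟨φ, hφ, hφne⟩ := hsep x y hne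
  exact hφne (DFunLike.congr_fun hxy ⟨φ, hφ⟩)

theorem deltaPhi_mem_KPhi [CompactSpace K] (h1 : ContinuousMap.const K (1 : ℝ) ∈ Φ) (x : K) :
    deltaPhi Φ x ∈ KPhi Φ h1 := by
  have : Nonempty K := ⟨x⟩
  have hone : ‖(⟨ContinuousMap.const K 1, h1⟩ : Φ)‖ = 1 := norm_one (α := C(K, ℝ))
  refine ⟨le_antisymm ?_ ?_, rfl⟩
  · refine ContinuousLinearMap.opNorm_le_bound _ zero_le_one fun φ => ?_
    simpa using (φ : C(K, ℝ)).norm_coe_le_norm x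
  · calc (1 : ℝ) = ‖WeakDual.toStrongDual (deltaPhi Φ x) ⟨ContinuousMap.const K 1, h1⟩‖ := by simp
      _ ≤ _ := ContinuousLinearMap.unit_le_opNorm (𝕜 := ℝ) (𝕜₂ := ℝ) (E := Φ) (F := ℝ) _ _ hone.le

theorem deltaPhi_mem_segment_of_mem_kyFanSegment {x y z : K} (hx : x ∈ kyFanSegment Φ y z) :
    deltaPhi Φ x ∈ segment ℝ (deltaPhi Φ y) (deltaPhi Φ z) := by
  obtain ⟨a, b, ha, hb, hab, hδ⟩ := LinearMap.mem_segment_of_forall_apply_mem_uIcc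
    (f := (deltaPhi Φ x : Φ →L[ℝ] ℝ).toLinearMap) (g := (deltaPhi Φ y : Φ →L[ℝ] ℝ).toLinearMap)
    (h := (deltaPhi Φ z : Φ →L[ℝ] ℝ).toLinearMap)
    fun φ => apply_mem_uIcc_of_mem_kyFanSegment hx φ.2
  exact ⟨a, b, ha, hb, hab, ContinuousLinearMap.ext (LinearMap.congr_fun hδ)⟩

end Delta

theorem stmt11_general {K : Type*} [TopologicalSpace K] [CompactSpace K]
    (Φ : Submodule ℝ C(K, ℝ))
    (hsep : ∀ x y : K, x ≠ y → ∃ φ ∈ Φ, φ x ≠ φ y)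
    (hconst : ∀ c : ℝ, ContinuousMap.const K c ∈ Φ)
    (x : K) (hx : deltaPhi Φ x ∈ Set.extremePoints ℝ (KPhi Φ (hconst 1)))
    (y z : K)
    (hseg : ∀ φ : C(K, ℝ), φ ∈ Φ → φ x ≤ min (φ y) (φ z) → φ x = φ y ∧ φ x = φ z) :
    x = y ∧ x = z := by
  have hKF : x ∈ kyFanSegment Φ y z := hseg
  have hendpoint :=
    (mem_extremePoints_iff_forall_segment (𝕜 := ℝ) (A := KPhi Φ (hconst 1))).1 hx |>.2
      _ (deltaPhi_mem_KPhi (hconst 1) y) _ (deltaPhi_mem_KPhi (hconst 1) z)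
      (deltaPhi_mem_segment_of_mem_kyFanSegment hKF)
  rcases hendpoint with hy | hz
  · obtain rfl := deltaPhi_injective hsep hy
    exact ⟨rfl, eq_of_mem_kyFanSegment_left hsep hKF⟩
  · obtain rfl := deltaPhi_injective hsep hz
    exact ⟨eq_of_mem_kyFanSegment_right hsep hKF, rfl⟩

/-- Every `Φ`-extreme point of `K` is `Φ`-extreme in the sense of Ky Fan:
if `δ^Φ(x)` is an extreme point of `K(Φ)` and `x` belongs to the Ky Fan `Φ`-segment
`[y,z]_Φ`, then `x = y = z`. -/
theorem stmt11 {K : Type*} [TopologicalSpace K] [CompactSpace K] [T2Space K]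
    (Φ : Submodule ℝ C(K, ℝ)) (hΦclosed : IsClosed (Φ : Set C(K, ℝ)))
    (hsep : ∀ x y : K, x ≠ y → ∃ φ ∈ Φ, φ x ≠ φ y)
    (hconst : ∀ c : ℝ, ContinuousMap.const K c ∈ Φ)
    (x : K) (hx : deltaPhi Φ x ∈ Set.extremePoints ℝ (KPhi Φ (hconst 1)))
    (y z : K)
    (hseg : ∀ φ : C(K, ℝ), φ ∈ Φ → φ x ≤ min (φ y) (φ z) → φ x = φ y ∧ φ x = φ z) :
    x = y ∧ x = z :=
  stmt11_general Φ hsep hconst x hx y z hseg
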